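/- arXiv:1906.00725 — 2 statements merged into one kernel-verified Lean document; each statement's English description precedes it below -/
import Mathlib

section
/- Let n be odd and p ≥ 0 with 2p ≤ n, and write n×n complex matrices in 3×3 block form with diagonal blocks of sizes p, n−2p, p (via the order-preserving identification of the index set with Fin p ⊕ Fin (n−2p) ⊕ Fin p). Then: (i) wₙ equals the block matrix whose (1,3) block is wₚ, whose (2,2) block is (−1)^p • w_{n−2p}, whose (3,1) block is wₚᵀ, and whose other blocks are zero. (ii) Let J_{n,p} be the symmetric matrix whose (1,3) block is wₚ, whose (2,2) block is the identity I_{n−2p}, whose (3,1) block is wₚᵀ, and whose other blocks are zero. Then every invertible n×n complex matrix g of block form (A, 0, B; 0, I_{n−2p}, 0; C, 0, D) satisfying gᵀ * J_{n,p} * g = J_{n,p} also satisfies wₙ * (gᵀ)⁻¹ * wₙ⁻¹ = g. -/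
open Matrix

/-- The `n × n` complex antidiagonal sign matrix `wₙ` of equation (5.2). -/
noncomputable def w (n : ℕ) : Matrix (Fin n) (Fin n) ℂ :=
  Matrix.of fun i j => if (i : ℕ) + (j : ℕ) + 1 = n then (-1 : ℂ) ^ (i : ℕ) else 0

/-- The order-preserving identification of `Fin p ⊕ (Fin m ⊕ Fin p)` with `Fin n`
(diagonal blocks of sizes `p`, `m`, `p`). -/
def e3 (p m n : ℕ) (h : p + (m + p) = n) : (Fin p ⊕ (Fin m ⊕ Fin p)) ≃ Fin n :=
  ((Equiv.refl (Fin p)).sumCongr finSumFinEquiv).trans (finSumFinEquiv.trans (finCongr h))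

/-- The 3×3-block matrix with `(1,3)` block `X13`, `(2,2)` block `X22`, `(3,1)` block `X31`,
and all other blocks zero. -/
noncomputable def blk3 {p m : ℕ} (X13 : Matrix (Fin p) (Fin p) ℂ)
    (X22 : Matrix (Fin m) (Fin m) ℂ) (X31 : Matrix (Fin p) (Fin p) ℂ) :
    Matrix (Fin p ⊕ (Fin m ⊕ Fin p)) (Fin p ⊕ (Fin m ⊕ Fin p)) ℂ :=
  Matrix.of fun i j =>
    match i, j with
    | Sum.inl i, Sum.inr (Sum.inr j) => X13 i j
    | Sum.inr (Sum.inl i), Sum.inr (Sum.inl j) => X22 i j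
    | Sum.inr (Sum.inr i), Sum.inl j => X31 i j
    | _, _ => 0

/-- The 3×3-block matrix `(A, 0, B; 0, I, 0; C, 0, D)`. -/
noncomputable def gblk {p m : ℕ} (A B C D : Matrix (Fin p) (Fin p) ℂ) :
    Matrix (Fin p ⊕ (Fin m ⊕ Fin p)) (Fin p ⊕ (Fin m ⊕ Fin p)) ℂ :=
  Matrix.of fun i j =>
    match i, j with
    | Sum.inl i, Sum.inl j => A i j
    | Sum.inl i, Sum.inr (Sum.inr j) => B i j
    | Sum.inr (Sum.inl i), Sum.inr (Sum.inl j) => (1 : Matrix (Fin m) (Fin m) ℂ) i j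
    | Sum.inr (Sum.inr i), Sum.inl j => C i j
    | Sum.inr (Sum.inr i), Sum.inr (Sum.inr j) => D i j
    | _, _ => 0

/- ### Auxiliary lemmas -/

lemma my_neg_one_pow_mod (a : ℕ) : (-1:ℂ)^a = (-1:ℂ)^(a % 2) := by
  conv_lhs => rw [← Nat.div_add_mod a 2]
  rw [pow_add, pow_mul, neg_one_sq, one_pow, one_mul]

lemma my_neg_one_pow_congr {a b : ℕ} (h : a % 2 = b % 2) : (-1:ℂ)^a = (-1:ℂ)^b := by
  rw [my_neg_one_pow_mod a, my_neg_one_pow_mod b, h]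

lemma w_apply' (k : ℕ) (i j : Fin k) :
    w k i j = if j = Fin.rev i then (-1:ℂ)^(i:ℕ) else 0 := by
  have : (i:ℕ) + (j:ℕ) + 1 = k ↔ j = Fin.rev i := by
    rw [Fin.ext_iff, Fin.val_rev]
    omega
  simp [w, this]

lemma w_mul_wT (k : ℕ) : w k * (w k)ᵀ = 1 := by
  ext i j
  simp only [Matrix.mul_apply, Matrix.transpose_apply, w_apply', ite_mul, zero_mul,
    Finset.sum_ite_eq', Finset.mem_univ, if_true]
  rcases eq_or_ne i j with rfl | hij
  · simp [← pow_add, Matrix.one_apply,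
      my_neg_one_pow_congr (a := (i:ℕ) + i) (b := 0) (by omega)]
  · have : Fin.rev i ≠ Fin.rev j := fun h => hij (Fin.rev_injective h)
    simp [Matrix.one_apply, hij, this]

lemma wT_eq {k : ℕ} (hk : Odd k) : (w k)ᵀ = w k := by
  ext i j
  simp only [Matrix.transpose_apply, w, Matrix.of_apply]
  by_cases h : (i:ℕ) + (j:ℕ) + 1 = k
  · rw [if_pos (by omega), if_pos h]
    exact my_neg_one_pow_congr (by obtain ⟨t, ht⟩ := hk; omega)
  · rw [if_neg (by omega), if_neg h]

lemma w_mul_w {k : ℕ} (hk : Odd k) : w k * w k = 1 := by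
  nth_rewrite 2 [← wT_eq hk]
  exact w_mul_wT k

lemma wT_mul_w (k : ℕ) : (w k)ᵀ * w k = 1 := mul_eq_one_comm.mp (w_mul_wT k)

/-- diagonal 3-block matrix -/
noncomputable def dblk3 {p m : ℕ} (X : Matrix (Fin p) (Fin p) ℂ)
    (Y : Matrix (Fin m) (Fin m) ℂ) (Z : Matrix (Fin p) (Fin p) ℂ) :
    Matrix (Fin p ⊕ (Fin m ⊕ Fin p)) (Fin p ⊕ (Fin m ⊕ Fin p)) ℂ :=
  Matrix.of fun i j =>
    match i, j with
    | Sum.inl i, Sum.inl j => X i j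
    | Sum.inr (Sum.inl i), Sum.inr (Sum.inl j) => Y i j
    | Sum.inr (Sum.inr i), Sum.inr (Sum.inr j) => Z i j
    | _, _ => 0

lemma blk3_mul_blk3 {p m : ℕ} (X Y' : Matrix (Fin p) (Fin p) ℂ)
    (X' Y : Matrix (Fin m) (Fin m) ℂ) (Z Z' : Matrix (Fin p) (Fin p) ℂ) :
    blk3 X X' Z * blk3 Y' Y Z' = dblk3 (X * Z') (X' * Y) (Z * Y') := by
  ext i j
  rcases i with i | i | i <;> rcases j with j | j | j <;>
    simp [Matrix.mul_apply, Fintype.sum_sum_type, blk3, dblk3]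

lemma dblk3_one {p m : ℕ} : (dblk3 1 1 1 : Matrix (Fin p ⊕ (Fin m ⊕ Fin p)) _ ℂ) = 1 := by
  ext i j
  rcases i with i | i | i <;> rcases j with j | j | j <;>
    simp [dblk3, Matrix.one_apply]

lemma dblk3_mul_gblk_mul_dblk3 {p m : ℕ} (Y : Matrix (Fin m) (Fin m) ℂ)
    (hY : Y * Y = 1) (A B C D : Matrix (Fin p) (Fin p) ℂ) :
    dblk3 1 Y 1 * gblk A B C D * dblk3 1 Y 1 = gblk A B C D := by
  ext i j
  rcases i with i | i | i <;> rcases j with j | j | j <;>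
    simp [Matrix.mul_apply, Fintype.sum_sum_type, dblk3, gblk, Matrix.one_apply,
      Finset.mul_sum]
  · have := congrFun (congrFun hY i) j
    simpa [Matrix.mul_apply, Matrix.one_apply] using this

lemma e3_inl {p m n : ℕ} (h : p + (m + p) = n) (i : Fin p) :
    ((e3 p m n h) (Sum.inl i) : ℕ) = i := by
  simp [e3]

lemma e3_inr_inl {p m n : ℕ} (h : p + (m + p) = n) (i : Fin m) :
    ((e3 p m n h) (Sum.inr (Sum.inl i)) : ℕ) = p + i := by
  simp [e3]

lemma e3_inr_inr {p m n : ℕ} (h : p + (m + p) = n) (i : Fin p) :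
    ((e3 p m n h) (Sum.inr (Sum.inr i)) : ℕ) = p + (m + i) := by
  simp [e3]

lemma part1 {p m n : ℕ} (h : p + (m + p) = n) (hm : Odd m) :
    Matrix.reindex (e3 p m n h).symm (e3 p m n h).symm (w n)
      = blk3 (w p) (((-1 : ℂ) ^ p) • w m) (w p)ᵀ := by
  obtain ⟨t, ht⟩ := hm
  ext i j
  rcases i with i | i | i <;> rcases j with j | j | j <;>
    · have hi := i.isLt
      have hj := j.isLt
      simp only [Matrix.reindex_apply, Matrix.submatrix_apply, Equiv.symm_symm, w, blk3,
        Matrix.of_apply, Matrix.smul_apply, Matrix.transpose_apply, smul_eq_mul,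
        e3_inl h, e3_inr_inl h, e3_inr_inr h]
      split_ifs <;>
        first
          | rfl
          | omega
          | (exact my_neg_one_pow_congr (by omega))
          | (rw [pow_add])
          | ring

theorem stmt2 (n p : ℕ) (hodd : Odd n) (h2p : 2 * p ≤ n) :
    let e := e3 p (n - 2 * p) n (by omega)
    let J := Matrix.reindex e e (blk3 (w p) (1 : Matrix (Fin (n - 2 * p)) (Fin (n - 2 * p)) ℂ) (w p)ᵀ)
    -- (i) `wₙ` in block form
    (Matrix.reindex e.symm e.symm (w n)
        = blk3 (w p) (((-1 : ℂ) ^ p) • w (n - 2 * p)) (w p)ᵀ) ∧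
    -- (ii) elements of the orthogonal group of `J_{n,p}` in block position are fixed
    -- by the involution `g ↦ wₙ (gᵀ)⁻¹ wₙ⁻¹`
    (∀ A B C D : Matrix (Fin p) (Fin p) ℂ,
      ∀ g : Matrix (Fin n) (Fin n) ℂ,
        g = Matrix.reindex e e (gblk (m := n - 2 * p) A B C D) →
        IsUnit g → gᵀ * J * g = J →
        w n * (gᵀ)⁻¹ * (w n)⁻¹ = g) := by
  intro e J
  have hm : Odd (n - 2 * p) := by
    obtain ⟨t, ht⟩ := hodd
    exact ⟨t - p, by omega⟩
  have hpart1 : Matrix.reindex e.symm e.symm (w n)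
      = blk3 (w p) (((-1 : ℂ) ^ p) • w (n - 2 * p)) (w p)ᵀ := part1 _ hm
  refine ⟨hpart1, ?_⟩
  intro A B C D g hg hgu hJ
  set Y : Matrix (Fin (n - 2 * p)) (Fin (n - 2 * p)) ℂ := ((-1 : ℂ) ^ p) • w (n - 2 * p) with hY
  set Jb := blk3 (w p) (1 : Matrix (Fin (n - 2 * p)) (Fin (n - 2 * p)) ℂ) (w p)ᵀ with hJb
  set Wb := blk3 (w p) Y (w p)ᵀ with hWb
  -- multiplicativity of reindex
  have key : ∀ M N : Matrix (Fin p ⊕ (Fin (n - 2 * p) ⊕ Fin p)) (Fin p ⊕ (Fin (n - 2 * p) ⊕ Fin p)) ℂ,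
      Matrix.reindex e e M * Matrix.reindex e e N = Matrix.reindex e e (M * N) := by
    intro M N
    rw [← Matrix.reindexAlgEquiv_apply ℂ ℂ e, ← Matrix.reindexAlgEquiv_apply ℂ ℂ e,
      ← _root_.map_mul, Matrix.reindexAlgEquiv_apply]
  have hone : Matrix.reindex e e (1 : Matrix (Fin p ⊕ (Fin (n - 2 * p) ⊕ Fin p)) _ ℂ) = 1 := by
    rw [← Matrix.reindexAlgEquiv_apply ℂ ℂ e, _root_.map_one]
  -- w n in reindexed form
  have hwblk : w n = Matrix.reindex e e Wb := by
    have := hpart1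
    rw [← Matrix.reindex_symm] at this
    rw [← this, Equiv.apply_symm_apply]
  have hJeq : J = Matrix.reindex e e Jb := rfl
  -- Y * Y = 1
  have hYY : Y * Y = 1 := by
    rw [hY, smul_mul_assoc, mul_smul_comm, smul_smul, ← pow_add, w_mul_w hm,
      Even.neg_one_pow ⟨p, rfl⟩, one_smul]
  -- block products
  have hWJ : Wb * Jb = dblk3 1 Y 1 := by
    rw [hWb, hJb, blk3_mul_blk3, w_mul_wT, wT_mul_w, mul_one]
  have hJW : Jb * Wb = dblk3 1 Y 1 := by
    rw [hWb, hJb, blk3_mul_blk3, w_mul_wT, wT_mul_w, one_mul]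
  have hJJb : Jb * Jb = 1 := by
    rw [hJb, blk3_mul_blk3, w_mul_wT, wT_mul_w, one_mul, dblk3_one]
  have hJJ : J * J = 1 := by
    rw [hJeq, key, hJJb, hone]
  have hginv : (gᵀ)⁻¹ = J * g * J := by
    apply Matrix.inv_eq_right_inv
    calc gᵀ * (J * g * J) = (gᵀ * J * g) * J := by noncomm_ring
    _ = 1 := by rw [hJ, hJJ]
  have hwninv : (w n)⁻¹ = w n := Matrix.inv_eq_right_inv (w_mul_w hodd)
  rw [hginv, hwninv]
  calc w n * (J * g * J) * w n = (w n * J) * g * (J * w n) := by noncomm_ring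
    _ = g := by
        rw [hwblk, hJeq, hg, key, key, key, key, hWJ, hJW,
          dblk3_mul_gblk_mul_dblk3 Y hYY]
end

section
/- Let n ≥ 2 be even and write 2n×2n complex matrices in 2×2 block form with n×n blocks. For A = (a, b; c, d) ∈ SL(2,ℂ) let ι(A) = (a•Iₙ, b•Iₙ; c•Iₙ, d•Iₙ), and let d₀ be the block matrix (−Iₙ, 0; 0, Iₙ). Then for every A ∈ SL(2,ℂ): w₂ₙ * (ι(A)ᵀ)⁻¹ * w₂ₙ⁻¹ = (a•Iₙ, −b•Iₙ; −c•Iₙ, d•Iₙ) = d₀ * ι(A) * d₀⁻¹. -/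
open Matrix

/-- The order-preserving identification of `Fin n ⊕ Fin n` with `Fin (2 * n)`. -/
def esum (n : ℕ) : (Fin n ⊕ Fin n) ≃ Fin (2 * n) :=
  finSumFinEquiv.trans (finCongr (two_mul n).symm)

/-- `w (2*n)` transported to 2×2 block form with `n × n` blocks. -/
noncomputable def wb (n : ℕ) : Matrix (Fin n ⊕ Fin n) (Fin n ⊕ Fin n) ℂ :=
  Matrix.reindex (esum n).symm (esum n).symm (w (2 * n))

/-- For `A = (a, b; c, d)`, `ι(A)` is the block matrix `(a•Iₙ, b•Iₙ; c•Iₙ, d•Iₙ)`. -/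
noncomputable def iota (n : ℕ) (A : Matrix (Fin 2) (Fin 2) ℂ) :
    Matrix (Fin n ⊕ Fin n) (Fin n ⊕ Fin n) ℂ :=
  Matrix.fromBlocks (A 0 0 • 1) (A 0 1 • 1) (A 1 0 • 1) (A 1 1 • 1)

/-- The block matrix `d₀ = (−Iₙ, 0; 0, Iₙ)`. -/
noncomputable def d0 (n : ℕ) : Matrix (Fin n ⊕ Fin n) (Fin n ⊕ Fin n) ℂ :=
  Matrix.fromBlocks (-1) 0 0 1

lemma w_mul_w_s5 {n : ℕ} (hn : Even n) (h1 : 1 ≤ n) : w n * w n = -1 := by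
  ext i k
  rw [Matrix.mul_apply]
  have hi := i.is_lt
  have hk := k.is_lt
  have hj : n - 1 - (i : ℕ) < n := by omega
  rw [Finset.sum_eq_single (⟨n - 1 - i, hj⟩ : Fin n)]
  · have hv : ((⟨n - 1 - i, hj⟩ : Fin n) : ℕ) = n - 1 - (i : ℕ) := rfl
    simp only [w, Matrix.of_apply, hv]
    rw [if_pos (by omega)]
    by_cases hki : (k : ℕ) = i
    · rw [if_pos (by omega)]
      have hik : i = k := Fin.ext hki.symm
      subst hik
      simp only [Matrix.neg_apply, Matrix.one_apply_eq]
      rw [← pow_add]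
      have h2 : (i : ℕ) + (n - 1 - (i : ℕ)) = n - 1 := by omega
      rw [h2, Odd.neg_one_pow (Nat.Even.sub_odd h1 hn odd_one)]
    · rw [if_neg (by omega)]
      have : i ≠ k := fun h => hki (by rw [h])
      simp [Matrix.one_apply, this]
  · intro j _ hj'
    simp only [w, Matrix.of_apply]
    rw [if_neg]
    · simp
    · intro h
      exact hj' (Fin.ext (by simp only [Fin.val_mk]; omega))
  · simp

lemma wb_eq {n : ℕ} (hn : Even n) : wb n = Matrix.fromBlocks 0 (w n) (w n) 0 := by
  have hl : ∀ i : Fin n, ((esum n (Sum.inl i)) : ℕ) = i := by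
    intro i; simp [esum]
  have hr : ∀ i : Fin n, ((esum n (Sum.inr i)) : ℕ) = n + i := by
    intro i; simp [esum]; omega
  ext x y
  rcases x with i | i <;> rcases y with j | j <;>
    simp only [wb, Matrix.reindex_apply, Equiv.symm_symm, Matrix.submatrix_apply, w,
      Matrix.of_apply, hl, hr, Matrix.fromBlocks_apply₁₁, Matrix.fromBlocks_apply₁₂,
      Matrix.fromBlocks_apply₂₁, Matrix.fromBlocks_apply₂₂, Matrix.zero_apply]
  · rw [if_neg (by omega)]
  · by_cases h : (i : ℕ) + (j : ℕ) + 1 = n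
    · rw [if_pos (by omega), if_pos h]
    · rw [if_neg (by omega), if_neg h]
  · by_cases h : (i : ℕ) + (j : ℕ) + 1 = n
    · rw [if_pos (by omega), if_pos h, pow_add, Even.neg_one_pow hn, one_mul]
    · rw [if_neg (by omega), if_neg h]
  · rw [if_neg (by omega)]

theorem stmt5 (n : ℕ) (hn : Even n) (hn2 : 2 ≤ n)
    (A : Matrix (Fin 2) (Fin 2) ℂ) (hA : A.det = 1) :
    wb n * ((iota n A)ᵀ)⁻¹ * (wb n)⁻¹
        = Matrix.fromBlocks (A 0 0 • 1) (-(A 0 1) • 1) (-(A 1 0) • 1) (A 1 1 • 1) ∧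
    wb n * ((iota n A)ᵀ)⁻¹ * (wb n)⁻¹ = d0 n * iota n A * (d0 n)⁻¹ := by
  rw [Matrix.det_fin_two] at hA
  set a := A 0 0 with ha
  set b := A 0 1 with hb
  set c := A 1 0 with hc
  set d := A 1 1 with hd
  have hdet : a * d - b * c = 1 := hA
  have hiota : iota n A = Matrix.fromBlocks (a • 1) (b • 1) (c • 1) (d • 1) := by
    rw [iota, ← ha, ← hb, ← hc, ← hd]
  clear_value a b c d
  have hww : w n * w n = -1 := w_mul_w_s5 hn (by omega)
  have hwb2 : wb n * wb n = -1 := by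
    rw [wb_eq hn, Matrix.fromBlocks_multiply, ← Matrix.fromBlocks_one,
      Matrix.fromBlocks_neg, Matrix.fromBlocks_inj]
    refine ⟨?_, ?_, ?_, ?_⟩ <;> simp [hww]
  have hwbinv : (wb n)⁻¹ = -(wb n) :=
    inv_eq_right_inv (by rw [mul_neg, hwb2, neg_neg])
  have htrans : (iota n A)ᵀ = Matrix.fromBlocks (a • 1) (c • 1) (b • 1) (d • 1) := by
    rw [hiota, Matrix.fromBlocks_transpose]
    simp
  have htinv : ((iota n A)ᵀ)⁻¹ = Matrix.fromBlocks (d • 1) (-c • 1) (-b • 1) (a • 1) := by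
    apply inv_eq_right_inv
    rw [htrans, Matrix.fromBlocks_multiply, ← Matrix.fromBlocks_one, Matrix.fromBlocks_inj]
    refine ⟨?_, ?_, ?_, ?_⟩ <;>
      simp only [Matrix.smul_mul, Matrix.mul_smul, Matrix.mul_one, Matrix.one_mul,
        smul_smul, neg_smul, smul_neg, neg_neg] <;>
      match_scalars <;>
      first | ring1 | linear_combination hdet
  have key : wb n * ((iota n A)ᵀ)⁻¹ * (wb n)⁻¹
      = Matrix.fromBlocks (a • 1) (-b • 1) (-c • 1) (d • 1) := by
    rw [htinv, hwbinv, wb_eq hn, mul_neg, Matrix.fromBlocks_multiply,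
      Matrix.fromBlocks_multiply, Matrix.fromBlocks_neg, Matrix.fromBlocks_inj]
    refine ⟨?_, ?_, ?_, ?_⟩ <;>
      simp only [Matrix.smul_mul, Matrix.mul_smul, Matrix.mul_one, Matrix.one_mul,
        Matrix.zero_mul, Matrix.mul_zero, Matrix.mul_neg, Matrix.neg_mul,
        zero_add, add_zero, smul_zero, neg_zero, Matrix.add_mul, Matrix.mul_add,
        smul_smul, neg_smul, smul_neg, neg_neg, hww] <;>
      (try match_scalars) <;>
      first | ring1 | linear_combination hdet
  have hd02 : d0 n * d0 n = 1 := by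
    rw [d0, Matrix.fromBlocks_multiply, ← Matrix.fromBlocks_one, Matrix.fromBlocks_inj]
    refine ⟨?_, ?_, ?_, ?_⟩ <;> simp
  have hd0inv : (d0 n)⁻¹ = d0 n := inv_eq_right_inv hd02
  refine ⟨?_, ?_⟩
  · rw [key]
  · rw [key, hd0inv, d0, hiota, Matrix.fromBlocks_multiply, Matrix.fromBlocks_multiply,
      Matrix.fromBlocks_inj]
    refine ⟨?_, ?_, ?_, ?_⟩ <;>
      simp only [Matrix.neg_mul, Matrix.mul_neg, Matrix.one_mul, Matrix.mul_one,
        Matrix.zero_mul, Matrix.mul_zero, zero_add, add_zero, smul_zero, neg_zero,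
        Matrix.add_mul, Matrix.mul_add, neg_smul, smul_neg, neg_neg] <;>
      (try match_scalars) <;>
      try ring1
end
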